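/- Let A be a Hopf algebra, R a left A-module algebra via ▷, L a subalgebra of R, and π: R → R a symmetric A-projection onto L. Then L is a symmetric partial A-module algebra via a · x := π(a ▷ x); in particular a·(x(b·y)) = (a₁·x)(a₂b·y) and a·((b·x)y) = (a₁b·x)(a₂·y) for all a,b ∈ A, x,y ∈ L. -/

import Mathlib

/-! Since `π` is multiplicative, `π(a ▷ (u v)) = Σ π(a₁ ▷ u) π(a₂ ▷ v)`. Inside `π(a ▷ -)` the
projection axioms first remove the inner `π` from `x π(b ▷ y)` (resp. `π(b ▷ x) y`), and then
`a₂ ▷ (b ▷ y) = a₂ b ▷ y` identifies the factor involving `b`. -/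

open TensorProduct

variable {k A R : Type*}

/-- Sweedler-style convolution: `conv f g = Σ f(a₁) * g(a₂)` as a linear map on `A`. -/
noncomputable def conv [Field k] [Ring A] [HopfAlgebra k A] [Ring R] [Algebra k R]
    (f g : A →ₗ[k] R) : A →ₗ[k] R :=
  TensorProduct.lift ((LinearMap.mul k R).compl₁₂ f g) ∘ₗ Coalgebra.comul

theorem flip_apply_eq_flip_comp_mulRight {M : Type*} [CommSemiring k] [Semiring A] [Algebra k A]
    [AddCommMonoid M] [Module k M] (act : A →ₗ[k] M →ₗ[k] M)
    (hact_mul : ∀ (a b : A) (x : M), act (a * b) x = act a (act b x)) (b : A) (x : M) :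
    act.flip (act b x) = act.flip x ∘ₗ LinearMap.mulRight k b := by
  ext a
  simp [hact_mul]

section Convolution

variable {S : Type*} [Field k] [Ring A] [HopfAlgebra k A] [Ring R] [Algebra k R]
  [Ring S] [Algebra k S]

theorem comp_conv_of_map_mul (π : R →ₗ[k] S) (hπ_mul : ∀ x y : R, π (x * y) = π x * π y)
    (f g : A →ₗ[k] R) : π ∘ₗ conv f g = conv (π ∘ₗ f) (π ∘ₗ g) := by
  unfold conv
  rw [← LinearMap.comp_assoc]
  congr 1
  refine TensorProduct.ext' fun a b => ?_
  simp [hπ_mul]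

theorem map_act_mul_eq_conv (act : A →ₗ[k] R →ₗ[k] R)
    (hact_alg : ∀ (a : A) (x y : R), act a (x * y) = conv (act.flip x) (act.flip y) a)
    (π : R →ₗ[k] S) (hπ_mul : ∀ x y : R, π (x * y) = π x * π y) (a : A) (x y : R) :
    π (act a (x * y)) = conv (π ∘ₗ act.flip x) (π ∘ₗ act.flip y) a := by
  rw [hact_alg, ← comp_conv_of_map_mul π hπ_mul, LinearMap.comp_apply]

end Convolution

theorem symmetric_A_projection_induces_partial_action_general
    [Field k] [Ring A] [HopfAlgebra k A] [Ring R] [Algebra k R]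
    (act : A →ₗ[k] R →ₗ[k] R)
    -- R is a left A-module algebra:
    (hact_mul : ∀ (a b : A) (x : R), act (a * b) x = act a (act b x))
    (hact_alg : ∀ (a : A) (x y : R), act a (x * y) = conv (act.flip x) (act.flip y) a)
    -- L is a subalgebra of R:
    (L : Submodule k R)
    -- π is a symmetric A-projection over L:
    (π : R →ₗ[k] R)
    (hπ_mul : ∀ x y : R, π (x * y) = π x * π y)
    (hπ_proj : ∀ (a b : A), ∀ x ∈ L, ∀ y ∈ L,
      π (act a (x * π (act b y))) = π (act a (x * act b y)))
    (hπ_symm : ∀ (a b : A), ∀ x ∈ L, ∀ y ∈ L,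
      π (act a (π (act b x) * y)) = π (act a (act b x * y))) :
    -- the induced partial action a · x := π (a ▷ x), bundled as pact:
    ∀ pact : A →ₗ[k] R →ₗ[k] R,
      pact = (LinearMap.llcomp k R R R π) ∘ₗ act →
      -- a·(x(b·y)) = Σ (a₁·x)(a₂b·y)
      (∀ (a b : A), ∀ x ∈ L, ∀ y ∈ L,
        pact a (x * pact b y) =
          conv (pact.flip x) ((pact.flip y) ∘ₗ LinearMap.mulRight k b) a) ∧
      -- a·((b·x)y) = Σ (a₁b·x)(a₂·y)
      (∀ (a b : A), ∀ x ∈ L, ∀ y ∈ L,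
        pact a (pact b x * y) =
          conv ((pact.flip x) ∘ₗ LinearMap.mulRight k b) (pact.flip y) a) := by
  rintro pact rfl
  have hflip : ∀ x : R, (LinearMap.llcomp k R R R π ∘ₗ act).flip x = π ∘ₗ act.flip x :=
    fun _ => rfl
  simp only [hflip, LinearMap.comp_assoc, ← flip_apply_eq_flip_comp_mulRight act hact_mul]
  refine ⟨fun a b x hx y hy => ?_, fun a b x hx y hy => ?_⟩
  · exact (hπ_proj a b x hx y hy).trans (map_act_mul_eq_conv act hact_alg π hπ_mul a _ _)
  · exact (hπ_symm a b x hx y hy).trans (map_act_mul_eq_conv act hact_alg π hπ_mul a _ _)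

/-- If `R` is a left `A`-module algebra, `L ⊆ R` a subalgebra and
`π : R → R` a symmetric `A`-projection onto `L`, then `a · x := π(a ▷ x)` makes `L`
a symmetric partial `A`-module algebra: `a·(x(b·y)) = Σ (a₁·x)(a₂b·y)` and
`a·((b·x)y) = Σ (a₁b·x)(a₂·y)` for `x, y ∈ L`. -/
theorem symmetric_A_projection_induces_partial_action
    [Field k] [Ring A] [HopfAlgebra k A] [Ring R] [Algebra k R]
    (act : A →ₗ[k] R →ₗ[k] R)
    -- R is a left A-module algebra:
    (hact_one : ∀ x : R, act 1 x = x)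
    (hact_mul : ∀ (a b : A) (x : R), act (a * b) x = act a (act b x))
    (hact_alg : ∀ (a : A) (x y : R), act a (x * y) = conv (act.flip x) (act.flip y) a)
    -- L is a subalgebra of R:
    (L : Submodule k R) (hL_mul : ∀ x ∈ L, ∀ y ∈ L, x * y ∈ L)
    -- π is a symmetric A-projection over L:
    (π : R →ₗ[k] R)
    (hπ_mul : ∀ x y : R, π (x * y) = π x * π y)
    (hπ_range : ∀ r : R, π r ∈ L)
    (hπ_fix : ∀ x ∈ L, π x = x)
    (hπ_proj : ∀ (a b : A), ∀ x ∈ L, ∀ y ∈ L,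
      π (act a (x * π (act b y))) = π (act a (x * act b y)))
    (hπ_symm : ∀ (a b : A), ∀ x ∈ L, ∀ y ∈ L,
      π (act a (π (act b x) * y)) = π (act a (act b x * y))) :
    -- the induced partial action a · x := π (a ▷ x), bundled as pact:
    ∀ pact : A →ₗ[k] R →ₗ[k] R,
      pact = (LinearMap.llcomp k R R R π) ∘ₗ act →
      -- a·(x(b·y)) = Σ (a₁·x)(a₂b·y)
      (∀ (a b : A), ∀ x ∈ L, ∀ y ∈ L,
        pact a (x * pact b y) =
          conv (pact.flip x) ((pact.flip y) ∘ₗ LinearMap.mulRight k b) a) ∧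
      -- a·((b·x)y) = Σ (a₁b·x)(a₂·y)
      (∀ (a b : A), ∀ x ∈ L, ∀ y ∈ L,
        pact a (pact b x * y) =
          conv ((pact.flip x) ∘ₗ LinearMap.mulRight k b) (pact.flip y) a) :=
  symmetric_A_projection_induces_partial_action_general act hact_mul hact_alg L π hπ_mul hπ_proj
    hπ_symm
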